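/- Let G be a maximal plane graph with outer edge (v_1,v_n) and Hamiltonian cycle v_1,v_2,...,v_n. The Hamiltonian cycle is one-legged (no vertex v_j has both a neighbor v_i in the left graph G_l with i < j-1 and a neighbor v_k in the right graph G_r with k < j-1) if and only if for every i = 2,...,n, the edge (v_{i-1}, v_i) lies on the outer face of the subgraph G_i induced by v_1,...,v_i. -/

import Mathlib

open Set

/- Setting: a Hamiltonian maximal plane graph `G` with Hamiltonian cycle
`v_1, ..., v_n` (0-indexed `0, ..., n-1`) and edge `(v_1, v_n)` on the outer face.
The cycle splits `G` into the left graph `G_l` (edge set `El`) and the right graph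
`G_r` (edge set `Er`); edges are recorded as pairs `(i, j)` with `i < j`.  The graph is
drawn with vertex `j` at the point `(0, j)` on a vertical line, each edge as a
`y`-monotone curve `γ e`, edges of `G_l` in the left half-plane, edges of `G_r` in the
right half-plane (Hamiltonian path edges on the line), pairwise internally disjoint. -/

/-- The drawn point set of the subgraph `G_{m+1}` induced by the vertices `0, ..., m`. -/
noncomputable def drawingSet (E : Finset (ℕ × ℕ)) (γ : ℕ × ℕ → ℝ → ℝ × ℝ) (m : ℕ) :
    Set (ℝ × ℝ) :=
  ⋃ e ∈ E.filter (fun e => e.2 ≤ m), γ e '' Set.Icc (0 : ℝ) 1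

/-- The point `p` (of the drawing `U`) lies on the boundary of the outer (unbounded)
face: arbitrarily close to `p` there are points of the complement of `U` whose
connected component in the complement is unbounded. -/
def OnOuterFace (U : Set (ℝ × ℝ)) (p : ℝ × ℝ) : Prop :=
  ∀ ε > 0, ∃ q, q ∉ U ∧ dist q p < ε ∧
    ¬ Bornology.IsBounded (connectedComponentIn Uᶜ q)

/-- Vertex `j` is two-legged: it has a neighbour `v_i` in `G_l` with `i < j - 1` and a
neighbour `v_k` in `G_r` with `k < j - 1`. -/
def TwoLegged (El Er : Finset (ℕ × ℕ)) (j : ℕ) : Prop :=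
  (∃ i, i + 1 < j ∧ (i, j) ∈ El) ∧ (∃ k, k + 1 < j ∧ (k, j) ∈ Er)

/-! Every edge is a `y`-monotone curve, hence the graph `x = φ y` of a continuous function, and the
path edges, which belong to both `G_l` and `G_r`, fill the axis `x = 0`.  If `v_i` is not
two-legged, then on one side of the axis no edge of `G_i` other than `(v_{i-1}, v_i)` rises
above height `i - 1`, so a vertical ray beside that edge escapes to infinity.  If `v_j` has legs
`(v_a, v_j)` in `G_l` and `(v_b, v_j)` in `G_r`, every point off the axis close enough to the
interior of `(v_{j-1}, v_j)` lies in the region between the axis and one of the legs; that region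
is bounded and its frontier is drawn, so the point's face is bounded. -/

open Bornology

lemma connectedComponentIn_compl_subset_of_frontier_subset {X : Type*} [TopologicalSpace X]
    {U W : Set X} (hW : IsOpen W) (hfr : frontier W ⊆ U) {q : X} (hqU : q ∉ U) (hqW : q ∈ W) :
    connectedComponentIn Uᶜ q ⊆ W := by
  refine isPreconnected_connectedComponentIn.subset_of_closure_inter_subset hW
    ⟨q, mem_connectedComponentIn hqU, hqW⟩ fun x ⟨hxW, hxC⟩ => ?_
  by_contra hx
  exact connectedComponentIn_subset _ _ hxC (hfr (hW.frontier_eq ▸ ⟨hxW, hx⟩))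

lemma not_isBounded_connectedComponentIn_of_vertical_ray {U : Set (ℝ × ℝ)} {x y : ℝ}
    (hray : ∀ s, y ≤ s → (x, s) ∉ U) : ¬ IsBounded (connectedComponentIn Uᶜ (x, y)) := by
  intro hb
  have hsub : (fun s => (x, s)) '' Ici y ⊆ connectedComponentIn Uᶜ (x, y) :=
    (isPreconnected_Ici.image _ (Continuous.prodMk_right x).continuousOn)
      |>.subset_connectedComponentIn ⟨y, self_mem_Ici, rfl⟩
        (by rintro _ ⟨s, hs, rfl⟩; exact hray s hs)
  have := (hb.subset hsub).image_snd
  rw [← image_comp] at this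
  exact not_bddAbove_Ici y (by simpa using this.bddAbove)

def stripBetween (f g : ℝ → ℝ) (A B : ℝ) : Set (ℝ × ℝ) :=
  {w | w.2 ∈ Ioo A B ∧ f w.2 < w.1 ∧ w.1 < g w.2}

section stripBetween

variable {f g : ℝ → ℝ} {A B : ℝ}

lemma isOpen_stripBetween (hf : Continuous f) (hg : Continuous g) :
    IsOpen (stripBetween f g A B) :=
  (isOpen_Ioo.preimage continuous_snd).inter
    ((isOpen_lt (hf.comp continuous_snd) continuous_fst).inter
      (isOpen_lt continuous_fst (hg.comp continuous_snd)))

lemma isBounded_stripBetween (hf : Continuous f) (hg : Continuous g) :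
    IsBounded (stripBetween f g A B) := by
  obtain ⟨m, hm⟩ := (isCompact_Icc (a := A) (b := B)).bddBelow_image hf.continuousOn
  obtain ⟨M, hM⟩ := (isCompact_Icc (a := A) (b := B)).bddAbove_image hg.continuousOn
  refine ((Metric.isBounded_Icc m M).prod (Metric.isBounded_Icc A B)).subset ?_
  rintro w ⟨hw, hfw, hgw⟩
  exact ⟨⟨(hm ⟨w.2, Ioo_subset_Icc_self hw, rfl⟩).trans hfw.le,
    hgw.le.trans (hM ⟨w.2, Ioo_subset_Icc_self hw, rfl⟩)⟩, Ioo_subset_Icc_self hw⟩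

lemma frontier_stripBetween_subset (hf : Continuous f) (hg : Continuous g)
    (hA : f A = g A) (hB : f B = g B) :
    frontier (stripBetween f g A B) ⊆ {w | w.2 ∈ Icc A B ∧ (w.1 = f w.2 ∨ w.1 = g w.2)} := by
  rw [(isOpen_stripBetween hf hg).frontier_eq]
  rintro w ⟨hcl, hw⟩
  have hclosed : IsClosed {w : ℝ × ℝ | w.2 ∈ Icc A B ∧ f w.2 ≤ w.1 ∧ w.1 ≤ g w.2} :=
    (isClosed_Icc.preimage continuous_snd).inter
      ((isClosed_le (hf.comp continuous_snd) continuous_fst).inter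
        (isClosed_le continuous_fst (hg.comp continuous_snd)))
  have hsub : stripBetween f g A B ⊆ {w | w.2 ∈ Icc A B ∧ f w.2 ≤ w.1 ∧ w.1 ≤ g w.2} :=
    fun _ ⟨hy, hfw, hgw⟩ => ⟨Ioo_subset_Icc_self hy, hfw.le, hgw.le⟩
  obtain ⟨hy, hfw, hgw⟩ := closure_minimal hsub hclosed hcl
  refine ⟨hy, ?_⟩
  by_contra! hne
  rcases eq_or_lt_of_le hy.1 with hyA | hyA
  · rw [← hyA] at hne hfw hgw; rw [hA] at hne hfw
    exact hne.2 (le_antisymm hgw hfw)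
  rcases eq_or_lt_of_le hy.2 with hyB | hyB
  · rw [hyB] at hne hfw hgw; rw [hB] at hne hfw
    exact hne.2 (le_antisymm hgw hfw)
  exact hw ⟨⟨hyA, hyB⟩, lt_of_le_of_ne hfw (Ne.symm hne.1), lt_of_le_of_ne hgw hne.2⟩

end stripBetween

lemma isBounded_connectedComponentIn_of_mem_stripBetween {U : Set (ℝ × ℝ)} {A B : ℝ}
    {φ : ℝ → ℝ} (hφ : Continuous φ) (hA : φ A = 0) (hB : φ B = 0)
    (hgraph : ∀ s ∈ Icc A B, (φ s, s) ∈ U) (haxis : ∀ s ∈ Icc A B, ((0 : ℝ), s) ∈ U)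
    {q : ℝ × ℝ} (hqU : q ∉ U)
    (hq : q ∈ stripBetween (fun s => min (φ s) 0) (fun s => max (φ s) 0) A B) :
    IsBounded (connectedComponentIn Uᶜ q) := by
  have hmin : Continuous fun s => min (φ s) 0 := hφ.min continuous_const
  have hmax : Continuous fun s => max (φ s) 0 := hφ.max continuous_const
  refine (isBounded_stripBetween hmin hmax).subset
    (connectedComponentIn_compl_subset_of_frontier_subset (isOpen_stripBetween hmin hmax) ?_ hqU hq)
  refine (frontier_stripBetween_subset hmin hmax (by simp [hA]) (by simp [hB])).trans ?_
  rintro ⟨x, y⟩ ⟨hy, hx⟩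
  have hx' : x = φ y ∨ x = 0 := by
    rcases hx with hx | hx
    · rcases min_choice (φ y) 0 with h | h <;> simp_all
    · rcases max_choice (φ y) 0 with h | h <;> simp_all
  rcases hx' with rfl | rfl
  exacts [hgraph y hy, haxis y hy]

lemma not_onOuterFace_of_mem_stripBetween {U : Set (ℝ × ℝ)} {A B C y : ℝ} {l r : ℝ → ℝ}
    (hl : Continuous l) (hr : Continuous r) (hlA : l A = 0) (hlC : l C = 0) (hrB : r B = 0)
    (hrC : r C = 0) (hlU : ∀ s ∈ Icc A C, (l s, s) ∈ U) (hrU : ∀ s ∈ Icc B C, (r s, s) ∈ U)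
    (haxis : ∀ s ∈ Icc (min A B) C, ((0 : ℝ), s) ∈ U)
    (hy : ((0 : ℝ), y) ∈ stripBetween l r (max A B) C) :
    ¬ OnOuterFace U (0, y) := by
  intro hout
  obtain ⟨ε, hε, hball⟩ := Metric.isOpen_iff.1 (isOpen_stripBetween hl hr) _ hy
  obtain ⟨q, hqU, hqy, hunb⟩ := hout ε hε
  obtain ⟨⟨hABq, hqC⟩, hlq, hqr⟩ := hball hqy
  have hq1 : q.1 ≠ 0 := fun h => hqU (by
    rw [← Prod.mk.eta (p := q), h]
    exact haxis q.2 ⟨min_le_max.trans hABq.le, hqC.le⟩)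
  apply hunb
  rcases hq1.lt_or_gt with hneg | hpos
  · exact isBounded_connectedComponentIn_of_mem_stripBetween hl hlA hlC hlU
      (fun s hs => haxis s ⟨(min_le_left _ _).trans hs.1, hs.2⟩) hqU
      ⟨⟨(le_max_left _ _).trans_lt hABq, hqC⟩, (min_le_left _ _).trans_lt hlq,
        hneg.trans_le (le_max_right _ _)⟩
  · exact isBounded_connectedComponentIn_of_mem_stripBetween hr hrB hrC hrU
      (fun s hs => haxis s ⟨(min_le_right _ _).trans hs.1, hs.2⟩) hqU
      ⟨⟨(le_max_right _ _).trans_lt hABq, hqC⟩, (min_le_right _ _).trans_lt hpos,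
        hqr.trans_le (le_max_left _ _)⟩

section Curve

variable {g : ℝ → ℝ × ℝ}

lemma snd_mem_Ioo_of_strictMonoOn (hm : StrictMonoOn (fun t => (g t).2) (Icc 0 1)) {t : ℝ}
    (ht : t ∈ Ioo (0 : ℝ) 1) : (g t).2 ∈ Ioo (g 0).2 (g 1).2 :=
  ⟨hm (left_mem_Icc.2 zero_le_one) (Ioo_subset_Icc_self ht) ht.1,
    hm (Ioo_subset_Icc_self ht) (right_mem_Icc.2 zero_le_one) ht.2⟩

lemma exists_continuous_fst_eq_comp_snd (hc : ContinuousOn g (Icc 0 1))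
    (hm : StrictMonoOn (fun t => (g t).2) (Icc 0 1)) :
    ∃ φ : ℝ → ℝ, Continuous φ ∧ ∀ t ∈ Icc (0 : ℝ) 1, (g t).1 = φ (g t).2 := by
  set A := (g 0).2
  set B := (g 1).2
  have hsnd : ∀ t ∈ Icc (0 : ℝ) 1, (g t).2 ∈ Icc A B := fun t ht =>
    ⟨hm.monotoneOn (left_mem_Icc.2 zero_le_one) ht ht.1,
      hm.monotoneOn ht (right_mem_Icc.2 zero_le_one) ht.2⟩
  let f : Icc (0 : ℝ) 1 → Icc A B := fun t => ⟨(g t).2, hsnd t t.2⟩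
  have hf : StrictMono f := fun s t hst => hm s.2 t.2 hst
  have hsurj : Function.Surjective f := fun s => by
    obtain ⟨t, ht, hts⟩ :=
      intermediate_value_Icc zero_le_one (continuous_snd.comp_continuousOn hc) s.2
    exact ⟨⟨t, ht⟩, Subtype.ext hts⟩
  let e := hf.orderIsoOfSurjective f hsurj
  have hAB : A ≤ B := (hsnd 0 (left_mem_Icc.2 zero_le_one)).2
  refine ⟨IccExtend hAB fun s => (g (e.symm s)).1, ?_, fun t ht => ?_⟩
  · exact (continuous_fst.comp_continuousOn hc).comp_continuous
      (continuous_subtype_val.comp e.symm.continuous) (fun s => (e.symm s).2) |>.Icc_extend'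
  · rw [IccExtend_of_mem hAB _ (hsnd t ht)]
    have : e.symm (f ⟨t, ht⟩) = ⟨t, ht⟩ := e.symm_apply_apply _
    rw [show (⟨(g t).2, hsnd t ht⟩ : Icc A B) = f ⟨t, ht⟩ from rfl, this]

lemma exists_graph_of_strictMonoOn_snd {A B : ℝ} (hc : ContinuousOn g (Icc 0 1))
    (hm : StrictMonoOn (fun t => (g t).2) (Icc 0 1)) (h0 : g 0 = (0, A)) (h1 : g 1 = (0, B)) :
    ∃ φ : ℝ → ℝ, Continuous φ ∧ φ A = 0 ∧ φ B = 0 ∧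
      (∀ s ∈ Icc A B, (φ s, s) ∈ g '' Icc 0 1) ∧ ∀ s ∈ Ioo A B, (φ s, s) ∈ g '' Ioo 0 1 := by
  obtain ⟨φ, hφ, hgφ⟩ := exists_continuous_fst_eq_comp_snd hc hm
  have hgraph : ∀ t ∈ Icc (0 : ℝ) 1, g t = (φ (g t).2, (g t).2) :=
    fun t ht => Prod.ext (hgφ t ht) rfl
  have hsnd := continuous_snd.comp_continuousOn hc
  refine ⟨φ, hφ, by simpa [h0] using (hgraph 0 (left_mem_Icc.2 zero_le_one)).symm,
    by simpa [h1] using (hgraph 1 (right_mem_Icc.2 zero_le_one)).symm, fun s hs => ?_,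
    fun s hs => ?_⟩
  · obtain ⟨t, ht, hts⟩ := intermediate_value_Icc zero_le_one hsnd (by simpa [h0, h1] using hs)
    exact ⟨t, ht, by rw [hgraph t ht, show (g t).2 = s from hts]⟩
  · obtain ⟨t, ht, hts⟩ := intermediate_value_Ioo zero_le_one hsnd (by simpa [h0, h1] using hs)
    exact ⟨t, ht, by rw [hgraph t (Ioo_subset_Icc_self ht), show (g t).2 = s from hts]⟩

end Curve

lemma mem_drawingSet {E : Finset (ℕ × ℕ)} {γ : ℕ × ℕ → ℝ → ℝ × ℝ} {m : ℕ} {p : ℝ × ℝ} :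
    p ∈ drawingSet E γ m ↔ ∃ e ∈ E, e.2 ≤ m ∧ ∃ t ∈ Icc (0 : ℝ) 1, γ e t = p := by
  simp only [drawingSet, mem_iUnion, Finset.mem_filter, mem_image, exists_prop, and_assoc]

lemma image_subset_drawingSet {E : Finset (ℕ × ℕ)} {γ : ℕ × ℕ → ℝ → ℝ × ℝ} {m : ℕ}
    {e : ℕ × ℕ} (he : e ∈ E) (hem : e.2 ≤ m) : γ e '' Icc 0 1 ⊆ drawingSet E γ m :=
  fun _ ⟨t, ht, hγ⟩ => mem_drawingSet.2 ⟨e, he, hem, t, ht, hγ⟩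

lemma drawingSet_mono (E : Finset (ℕ × ℕ)) (γ : ℕ × ℕ → ℝ → ℝ × ℝ) :
    Monotone (drawingSet E γ) := fun _ _ hmk _ hp => by
  obtain ⟨e, he, hem, ht⟩ := mem_drawingSet.1 hp
  exact mem_drawingSet.2 ⟨e, he, hem.trans hmk, ht⟩

lemma sub_one_edge_mem {n : ℕ} {E : Finset (ℕ × ℕ)} (hpath : ∀ i, i + 1 < n → (i, i + 1) ∈ E)
    {i : ℕ} (hi : 1 ≤ i) (hin : i < n) : (i - 1, i) ∈ E := by
  simpa [Nat.sub_add_cancel hi] using hpath (i - 1) (by omega)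

lemma zero_mem_drawingSet_of_mem_Icc {n : ℕ} {El Er : Finset (ℕ × ℕ)}
    (hpathl : ∀ i, i + 1 < n → (i, i + 1) ∈ El)
    (hpathr : ∀ i, i + 1 < n → (i, i + 1) ∈ Er)
    {γ : ℕ × ℕ → ℝ → ℝ × ℝ}
    (hcont : ∀ e ∈ El ∪ Er, ContinuousOn (γ e) (Icc 0 1))
    (hends : ∀ e ∈ El ∪ Er, γ e 0 = (0, (e.1 : ℝ)) ∧ γ e 1 = (0, (e.2 : ℝ)))
    (hleft : ∀ e ∈ El, ∀ t ∈ Icc (0 : ℝ) 1, (γ e t).1 ≤ 0)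
    (hright : ∀ e ∈ Er, ∀ t ∈ Icc (0 : ℝ) 1, 0 ≤ (γ e t).1)
    {k : ℕ} (hk : k + 1 < n) {s : ℝ} (hs : s ∈ Icc (k : ℝ) (k + 1)) :
    ((0 : ℝ), s) ∈ drawingSet (El ∪ Er) γ (k + 1) := by
  have he : (k, k + 1) ∈ El ∪ Er := Finset.mem_union_left _ (hpathl k hk)
  obtain ⟨h0, h1⟩ := hends _ he
  obtain ⟨t, ht, hts⟩ := intermediate_value_Icc zero_le_one
    (continuous_snd.comp_continuousOn (hcont _ he)) (by simpa [h0, h1] using hs)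
  have hx : (γ (k, k + 1) t).1 = 0 :=
    le_antisymm (hleft _ (hpathl k hk) t ht) (hright _ (hpathr k hk) t ht)
  exact image_subset_drawingSet he le_rfl ⟨t, ht, Prod.ext hx hts⟩

lemma zero_mem_drawingSet {n : ℕ} {El Er : Finset (ℕ × ℕ)}
    (hpathl : ∀ i, i + 1 < n → (i, i + 1) ∈ El)
    (hpathr : ∀ i, i + 1 < n → (i, i + 1) ∈ Er)
    {γ : ℕ × ℕ → ℝ → ℝ × ℝ}
    (hcont : ∀ e ∈ El ∪ Er, ContinuousOn (γ e) (Icc 0 1))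
    (hends : ∀ e ∈ El ∪ Er, γ e 0 = (0, (e.1 : ℝ)) ∧ γ e 1 = (0, (e.2 : ℝ)))
    (hleft : ∀ e ∈ El, ∀ t ∈ Icc (0 : ℝ) 1, (γ e t).1 ≤ 0)
    (hright : ∀ e ∈ Er, ∀ t ∈ Icc (0 : ℝ) 1, 0 ≤ (γ e t).1)
    {m : ℕ} (hm : 1 ≤ m) (hmn : m < n) {s : ℝ} (hs : s ∈ Icc (0 : ℝ) m) :
    ((0 : ℝ), s) ∈ drawingSet (El ∪ Er) γ m := by
  induction m, hm using Nat.le_induction generalizing s with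
  | base =>
    simpa using zero_mem_drawingSet_of_mem_Icc hpathl hpathr hcont hends hleft hright
      (k := 0) hmn (by simpa using hs)
  | succ m hm ih =>
    rcases le_or_gt s m with hsm | hsm
    · exact drawingSet_mono _ _ m.le_succ (ih (by omega) ⟨hs.1, hsm⟩)
    · exact zero_mem_drawingSet_of_mem_Icc hpathl hpathr hcont hends hleft hright hmn
        ⟨hsm.le, by simpa using hs.2⟩

lemma exists_leg_of_mem_drawingSet {n : ℕ} {El Er : Finset (ℕ × ℕ)}
    (hElb : ∀ e ∈ El, e.1 < e.2 ∧ e.2 < n) (hErb : ∀ e ∈ Er, e.1 < e.2 ∧ e.2 < n)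
    (hpathl : ∀ i, i + 1 < n → (i, i + 1) ∈ El)
    (hpathr : ∀ i, i + 1 < n → (i, i + 1) ∈ Er)
    {γ : ℕ × ℕ → ℝ → ℝ × ℝ}
    (hends : ∀ e ∈ El ∪ Er, γ e 0 = (0, (e.1 : ℝ)) ∧ γ e 1 = (0, (e.2 : ℝ)))
    (hmono : ∀ e ∈ El ∪ Er, StrictMonoOn (fun t => (γ e t).2) (Icc 0 1))
    (hleft : ∀ e ∈ El, ∀ t ∈ Icc (0 : ℝ) 1, (γ e t).1 ≤ 0)
    (hright : ∀ e ∈ Er, ∀ t ∈ Icc (0 : ℝ) 1, 0 ≤ (γ e t).1)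
    {i : ℕ} (hin : i < n) {x s : ℝ} (hx : x ≠ 0) (hs : (i : ℝ) - 1 < s)
    (hmem : (x, s) ∈ drawingSet (El ∪ Er) γ i) :
    ∃ e ∈ El ∪ Er, e.2 = i ∧ e.1 + 1 < i ∧ ∃ t ∈ Icc (0 : ℝ) 1, γ e t = (x, s) := by
  obtain ⟨e, he, hle, t, ht, hγ⟩ := mem_drawingSet.1 hmem
  have hse : s ≤ e.2 := by
    have := (hmono e he).monotoneOn ht (right_mem_Icc.2 zero_le_one) ht.2
    simpa [hγ, (hends e he).2] using this
  have hei : e.2 = i := by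
    have : (i : ℝ) < e.2 + 1 := by linarith
    have : i < e.2 + 1 := by exact_mod_cast this
    omega
  have he1 : e.1 < e.2 := by
    rcases Finset.mem_union.1 he with he | he
    exacts [(hElb e he).1, (hErb e he).1]
  refine ⟨e, he, hei, lt_of_le_of_ne (by omega) fun hpath => hx ?_, t, ht, hγ⟩
  -- `e` is the path edge `(i - 1, i)`, which lies in both `G_l` and `G_r`, hence on the axis
  have hpn : e.1 + 1 < n := by omega
  rw [show e = (e.1, e.1 + 1) from Prod.ext rfl (by omega)] at hγ
  rw [← show (γ (e.1, e.1 + 1) t).1 = x by rw [hγ]]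
  exact le_antisymm (hleft _ (hpathl _ hpn) t ht) (hright _ (hpathr _ hpn) t ht)

lemma exists_pathEdge_apply_eq {n : ℕ} {El Er : Finset (ℕ × ℕ)}
    (hpathl : ∀ i, i + 1 < n → (i, i + 1) ∈ El)
    (hpathr : ∀ i, i + 1 < n → (i, i + 1) ∈ Er)
    {γ : ℕ × ℕ → ℝ → ℝ × ℝ}
    (hends : ∀ e ∈ El ∪ Er, γ e 0 = (0, (e.1 : ℝ)) ∧ γ e 1 = (0, (e.2 : ℝ)))
    (hmono : ∀ e ∈ El ∪ Er, StrictMonoOn (fun t => (γ e t).2) (Icc 0 1))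
    (hleft : ∀ e ∈ El, ∀ t ∈ Icc (0 : ℝ) 1, (γ e t).1 ≤ 0)
    (hright : ∀ e ∈ Er, ∀ t ∈ Icc (0 : ℝ) 1, 0 ≤ (γ e t).1)
    {i : ℕ} (hi : 1 ≤ i) (hin : i < n) {t : ℝ} (ht : t ∈ Ioo (0 : ℝ) 1) :
    ∃ y ∈ Ioo ((i : ℝ) - 1) i, γ (i - 1, i) t = (0, y) := by
  have hpl := sub_one_edge_mem hpathl hi hin
  have hpath : (i - 1, i) ∈ El ∪ Er := Finset.mem_union_left _ hpl
  refine ⟨_, ?_, Prod.ext (le_antisymm (hleft _ hpl t (Ioo_subset_Icc_self ht))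
    (hright _ (sub_one_edge_mem hpathr hi hin) t (Ioo_subset_Icc_self ht))) rfl⟩
  have := snd_mem_Ioo_of_strictMonoOn (hmono _ hpath) ht
  rwa [(hends _ hpath).1, (hends _ hpath).2, Nat.cast_sub hi, Nat.cast_one] at this

lemma onOuterFace_of_not_twoLegged {n : ℕ} {El Er : Finset (ℕ × ℕ)}
    (hElb : ∀ e ∈ El, e.1 < e.2 ∧ e.2 < n) (hErb : ∀ e ∈ Er, e.1 < e.2 ∧ e.2 < n)
    (hpathl : ∀ i, i + 1 < n → (i, i + 1) ∈ El)
    (hpathr : ∀ i, i + 1 < n → (i, i + 1) ∈ Er)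
    {γ : ℕ × ℕ → ℝ → ℝ × ℝ}
    (hends : ∀ e ∈ El ∪ Er, γ e 0 = (0, (e.1 : ℝ)) ∧ γ e 1 = (0, (e.2 : ℝ)))
    (hmono : ∀ e ∈ El ∪ Er, StrictMonoOn (fun t => (γ e t).2) (Icc 0 1))
    (hleft : ∀ e ∈ El, ∀ t ∈ Icc (0 : ℝ) 1, (γ e t).1 ≤ 0)
    (hright : ∀ e ∈ Er, ∀ t ∈ Icc (0 : ℝ) 1, 0 ≤ (γ e t).1)
    {i : ℕ} (hi : 1 ≤ i) (hin : i < n) (hOL : ¬ TwoLegged El Er i) :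
    OnOuterFace (drawingSet (El ∪ Er) γ i) (γ (i - 1, i) (1 / 2)) := by
  obtain ⟨y, hy, hp⟩ := exists_pathEdge_apply_eq hpathl hpathr hends hmono hleft hright hi hin
    (t := 1 / 2) (by norm_num)
  rw [hp]
  intro ε hε
  obtain ⟨x, hx0, hxε, hxl, hxr⟩ : ∃ x : ℝ, x ≠ 0 ∧ |x| < ε ∧
      (x < 0 → ¬ ∃ k, k + 1 < i ∧ (k, i) ∈ El) ∧ (0 < x → ¬ ∃ k, k + 1 < i ∧ (k, i) ∈ Er) := by
    rcases not_and_or.1 hOL with hNL | hNR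
    · exact ⟨-(ε / 2), by linarith, by rw [abs_neg, abs_of_pos (by linarith)]; linarith,
        fun _ => hNL, fun _ => by linarith⟩
    · exact ⟨ε / 2, by linarith, by rw [abs_of_pos (by linarith)]; linarith,
        fun _ => by linarith, fun _ => hNR⟩
  -- a point of `G_i` off the axis above height `i - 1` lies on a leg of `v_i`, and the legs on
  -- the side of `x` are missing
  have hray : ∀ s, y ≤ s → (x, s) ∉ drawingSet (El ∪ Er) γ i := fun s hs hmem => by
    obtain ⟨e, he, rfl, he1, t, ht, hγ⟩ := exists_leg_of_mem_drawingSet hElb hErb hpathl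
      hpathr hends hmono hleft hright hin hx0 (hy.1.trans_le hs) hmem
    rcases Finset.mem_union.1 he with heEl | heEr
    · have : x ≤ 0 := by simpa [hγ] using hleft e heEl t ht
      exact hxl (this.lt_of_ne hx0) ⟨e.1, he1, heEl⟩
    · have : 0 ≤ x := by simpa [hγ] using hright e heEr t ht
      exact hxr (this.lt_of_ne hx0.symm) ⟨e.1, he1, heEr⟩
  exact ⟨(x, y), hray y le_rfl, by simpa [Prod.dist_eq, Real.dist_eq] using hxε,
    not_isBounded_connectedComponentIn_of_vertical_ray hray⟩

lemma not_onOuterFace_of_twoLegged {n : ℕ} {El Er : Finset (ℕ × ℕ)}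
    (hpathl : ∀ i, i + 1 < n → (i, i + 1) ∈ El)
    (hpathr : ∀ i, i + 1 < n → (i, i + 1) ∈ Er)
    {γ : ℕ × ℕ → ℝ → ℝ × ℝ}
    (hcont : ∀ e ∈ El ∪ Er, ContinuousOn (γ e) (Icc 0 1))
    (hends : ∀ e ∈ El ∪ Er, γ e 0 = (0, (e.1 : ℝ)) ∧ γ e 1 = (0, (e.2 : ℝ)))
    (hmono : ∀ e ∈ El ∪ Er, StrictMonoOn (fun t => (γ e t).2) (Icc 0 1))
    (hleft : ∀ e ∈ El, ∀ t ∈ Icc (0 : ℝ) 1, (γ e t).1 ≤ 0)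
    (hright : ∀ e ∈ Er, ∀ t ∈ Icc (0 : ℝ) 1, 0 ≤ (γ e t).1)
    (hsimple : ∀ e ∈ El ∪ Er, ∀ f ∈ El ∪ Er, e ≠ f →
      (γ e '' Ioo (0 : ℝ) 1) ∩ (γ f '' Ioo (0 : ℝ) 1) = ∅)
    {j : ℕ} (hjn : j < n) (hTL : TwoLegged El Er j) {t : ℝ} (ht : t ∈ Ioo (0 : ℝ) 1) :
    ¬ OnOuterFace (drawingSet (El ∪ Er) γ j) (γ (j - 1, j) t) := by
  obtain ⟨⟨a, haj, haEl⟩, ⟨b, hbj, hbEr⟩⟩ := hTL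
  have hj : 1 ≤ j := by omega
  obtain ⟨y, hy, hp⟩ := exists_pathEdge_apply_eq hpathl hpathr hends hmono hleft hright hj hjn ht
  have hpath : (j - 1, j) ∈ El ∪ Er := Finset.mem_union_left _ (sub_one_edge_mem hpathl hj hjn)
  have haE : (a, j) ∈ El ∪ Er := Finset.mem_union_left _ haEl
  have hbE : (b, j) ∈ El ∪ Er := Finset.mem_union_right _ hbEr
  obtain ⟨l, hl, hla, hlj, hlγ, hlγ'⟩ := exists_graph_of_strictMonoOn_snd (hcont _ haE)
    (hmono _ haE) (hends _ haE).1 (hends _ haE).2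
  obtain ⟨r, hr, hrb, hrj, hrγ, hrγ'⟩ := exists_graph_of_strictMonoOn_snd (hcont _ hbE)
    (hmono _ hbE) (hends _ hbE).1 (hends _ hbE).2
  -- a leg meets the path edge `(j - 1, j)` only in the vertex `j`, so it passes height `y` off
  -- the axis
  have hoff : ∀ c, (c, j) ∈ El ∪ Er → c + 1 < j → ∀ x, (x, y) ∈ γ (c, j) '' Ioo 0 1 → x ≠ 0 := by
    rintro c hc hcj x hx rfl
    have hne : (c, j) ≠ (j - 1, j) := fun h => by simp only [Prod.mk.injEq] at h; omega
    have : ((0 : ℝ), y) ∈ γ (c, j) '' Ioo 0 1 ∩ γ (j - 1, j) '' Ioo 0 1 := ⟨hx, t, ht, hp⟩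
    rwa [hsimple _ hc _ hpath hne] at this
  have hyc : ∀ c : ℕ, c + 1 < j → y ∈ Ioo (c : ℝ) j := fun c hcj => by
    have : (c : ℝ) + 1 < j := by exact_mod_cast hcj
    exact ⟨by linarith [hy.1], hy.2⟩
  obtain ⟨t₁, ht₁, hγl⟩ := hlγ' y (hyc a haj)
  obtain ⟨t₂, ht₂, hγr⟩ := hrγ' y (hyc b hbj)
  have hly : l y < 0 := lt_of_le_of_ne
    (by simpa [hγl] using hleft _ haEl t₁ (Ioo_subset_Icc_self ht₁))
    (hoff a haE haj _ ⟨t₁, ht₁, hγl⟩)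
  have hry : 0 < r y := lt_of_le_of_ne
    (by simpa [hγr] using hright _ hbEr t₂ (Ioo_subset_Icc_self ht₂))
    (hoff b hbE hbj _ ⟨t₂, ht₂, hγr⟩).symm
  rw [hp]
  exact not_onOuterFace_of_mem_stripBetween hl hr hla hlj hrb hrj
    (fun s hs => image_subset_drawingSet haE le_rfl (hlγ s hs))
    (fun s hs => image_subset_drawingSet hbE le_rfl (hrγ s hs))
    (fun s hs => zero_mem_drawingSet hpathl hpathr hcont hends hleft hright hj hjn
      ⟨(le_min a.cast_nonneg b.cast_nonneg).trans hs.1, hs.2⟩)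
    ⟨⟨max_lt (hyc a haj).1 (hyc b hbj).1, hy.2⟩, hly, hry⟩

theorem stmt_4_general (n : ℕ) (El Er : Finset (ℕ × ℕ))
    (hElb : ∀ e ∈ El, e.1 < e.2 ∧ e.2 < n) (hErb : ∀ e ∈ Er, e.1 < e.2 ∧ e.2 < n)
    (hpathl : ∀ i, i + 1 < n → (i, i + 1) ∈ El)
    (hpathr : ∀ i, i + 1 < n → (i, i + 1) ∈ Er)
    (γ : ℕ × ℕ → ℝ → ℝ × ℝ)
    (hcont : ∀ e ∈ El ∪ Er, ContinuousOn (γ e) (Icc 0 1))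
    (hends : ∀ e ∈ El ∪ Er, γ e 0 = (0, (e.1 : ℝ)) ∧ γ e 1 = (0, (e.2 : ℝ)))
    (hmono : ∀ e ∈ El ∪ Er, StrictMonoOn (fun t => (γ e t).2) (Icc 0 1))
    (hleft : ∀ e ∈ El, ∀ t ∈ Icc (0 : ℝ) 1, (γ e t).1 ≤ 0)
    (hright : ∀ e ∈ Er, ∀ t ∈ Icc (0 : ℝ) 1, 0 ≤ (γ e t).1)
    (hsimple : ∀ e ∈ El ∪ Er, ∀ f ∈ El ∪ Er, e ≠ f →
      (γ e '' Ioo (0 : ℝ) 1) ∩ (γ f '' Ioo (0 : ℝ) 1) = ∅) :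
    (∀ j < n, ¬ TwoLegged El Er j) ↔
      (∀ i, 1 ≤ i → i < n → ∃ t ∈ Ioo (0 : ℝ) 1,
        OnOuterFace (drawingSet (El ∪ Er) γ i) (γ (i - 1, i) t)) := by
  constructor
  · intro hOL i hi hin
    exact ⟨1 / 2, by norm_num, onOuterFace_of_not_twoLegged hElb hErb hpathl hpathr hends hmono
      hleft hright hi hin (hOL i hin)⟩
  · intro hface j hjn hTL
    obtain ⟨t, ht, hout⟩ := hface j (by obtain ⟨⟨a, ha, -⟩, -⟩ := hTL; omega) hjn
    exact not_onOuterFace_of_twoLegged hpathl hpathr hcont hends hmono hleft hright hsimple hjn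
      hTL ht hout

/-- The Hamiltonian cycle is one-legged (no vertex is two-legged) if and
only if for every `i = 1, ..., n-1` (1-indexed: `i = 2, ..., n`) the edge
`(v_{i-1}, v_i)` lies on the outer face of the subgraph induced by `v_0, ..., v_i`. -/
theorem stmt_4 (n : ℕ) (hn : 4 ≤ n) (El Er : Finset (ℕ × ℕ))
    (hElb : ∀ e ∈ El, e.1 < e.2 ∧ e.2 < n) (hErb : ∀ e ∈ Er, e.1 < e.2 ∧ e.2 < n)
    (hpathl : ∀ i, i + 1 < n → (i, i + 1) ∈ El)
    (hpathr : ∀ i, i + 1 < n → (i, i + 1) ∈ Er)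
    (hwrapl : (0, n - 1) ∈ El) (hwrapr : (0, n - 1) ∉ Er)
    (γ : ℕ × ℕ → ℝ → ℝ × ℝ)
    (hcont : ∀ e ∈ El ∪ Er, ContinuousOn (γ e) (Icc 0 1))
    (hends : ∀ e ∈ El ∪ Er, γ e 0 = (0, (e.1 : ℝ)) ∧ γ e 1 = (0, (e.2 : ℝ)))
    (hmono : ∀ e ∈ El ∪ Er, StrictMonoOn (fun t => (γ e t).2) (Icc 0 1))
    (hleft : ∀ e ∈ El, ∀ t ∈ Icc (0 : ℝ) 1, (γ e t).1 ≤ 0)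
    (hright : ∀ e ∈ Er, ∀ t ∈ Icc (0 : ℝ) 1, 0 ≤ (γ e t).1)
    (hsimple : ∀ e ∈ El ∪ Er, ∀ f ∈ El ∪ Er, e ≠ f →
      (γ e '' Ioo (0 : ℝ) 1) ∩ (γ f '' Ioo (0 : ℝ) 1) = ∅)
    (hvx : ∀ e ∈ El ∪ Er, ∀ t ∈ Ioo (0 : ℝ) 1, ∀ j, j < n → γ e t ≠ (0, (j : ℝ))) :
    (∀ j < n, ¬ TwoLegged El Er j) ↔
      (∀ i, 1 ≤ i → i < n → ∃ t ∈ Ioo (0 : ℝ) 1,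
        OnOuterFace (drawingSet (El ∪ Er) γ i) (γ (i - 1, i) t)) :=
  stmt_4_general n El Er hElb hErb hpathl hpathr γ hcont hends hmono hleft hright hsimple
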